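/- Let ρ be an m×n bipartite state and t ≥ 0 minimal such that (ρ + tσ)/(1+t) is absolutely separable for some state σ (t = AR(ρ), the robustness of nonabsolute separability). Then AR is convex: for states ρ₁, ρ₂ and p ∈ (0,1), AR(pρ₁ + (1−p)ρ₂) ≤ p·AR(ρ₁) + (1−p)·AR(ρ₂). -/

import Mathlib

open scoped ComplexOrder

/-- A quantum state: a positive semidefinite matrix with unit trace. -/
def IsState {d : Type*} [Fintype d] [DecidableEq d] (ρ : Matrix d d ℂ) : Prop :=
  ρ.PosSemidef ∧ ρ.trace = 1

/-- Separability of a bipartite state on `ℂ^m ⊗ ℂ^n`: a convex combination of product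
states. -/
def SepState {m n : ℕ} (ρ : Matrix (Fin m × Fin n) (Fin m × Fin n) ℂ) : Prop :=
  ∃ (k : ℕ) (p : Fin k → ℝ) (A : Fin k → Matrix (Fin m) (Fin m) ℂ)
    (B : Fin k → Matrix (Fin n) (Fin n) ℂ),
    (∀ i, 0 ≤ p i) ∧ (∑ i, p i = 1) ∧
    (∀ i, (A i).PosSemidef ∧ (A i).trace = 1 ∧ (B i).PosSemidef ∧ (B i).trace = 1) ∧
    ρ = ∑ i, (p i : ℂ) • Matrix.kroneckerMap (· * ·) (A i) (B i)

/-- Absolute separability: the state remains separable under every global unitary. -/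
def IsAbsSep {m n : ℕ} (ρ : Matrix (Fin m × Fin n) (Fin m × Fin n) ℂ) : Prop :=
  ∀ U ∈ Matrix.unitaryGroup (Fin m × Fin n) ℂ,
    SepState (U * ρ * star U)

/-- The robustness of nonabsolute separability: the minimal `t ≥ 0` such that mixing `ρ`
with some state `σ` in ratio `1 : t` yields an absolutely separable state. -/
noncomputable def AR {m n : ℕ} (ρ : Matrix (Fin m × Fin n) (Fin m × Fin n) ℂ) : ℝ :=
  sInf {t : ℝ | 0 ≤ t ∧ ∃ σ : Matrix (Fin m × Fin n) (Fin m × Fin n) ℂ,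
    IsState σ ∧ IsAbsSep ((((1 / (1 + t) : ℝ)) : ℂ) • (ρ + (t : ℂ) • σ))}

/-!
Write `T(ρ)` for the set of weights `t ≥ 0` for which some state `σ` makes `(ρ + tσ)/(1+t)`
absolutely separable, so that `AR ρ = inf T(ρ)`. If `tᵢ ∈ T(ρᵢ)` is witnessed by `σᵢ`, put
`t = pt₁ + (1-p)t₂` and let `σ` be the state proportional to `pt₁σ₁ + (1-p)t₂σ₂`. Then
`(pρ₁ + (1-p)ρ₂ + tσ)/(1+t)` is the convex combination, with weights `p(1+t₁)/(1+t)` and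
`(1-p)(1+t₂)/(1+t)`, of the two absolutely separable states `(ρᵢ + tᵢσᵢ)/(1+tᵢ)`, hence absolutely
separable. So `p T(ρ₁) + (1-p) T(ρ₂) ⊆ T(pρ₁ + (1-p)ρ₂)`, and taking infima gives the claim.
The sets `T(ρ)` are nonempty: since a state satisfies `ρ ≤ 1`, mixing it with weight
`t = 2mn - 1` with the state proportional to `2·1 - ρ` gives the maximally mixed state, which is a
product state and invariant under unitary conjugation.
-/

open Matrix
open scoped Pointwise

section State

variable {d : Type*} [Fintype d] [DecidableEq d]

lemma convex_setOf_isState : Convex ℝ {ρ : Matrix d d ℂ | IsState ρ} := by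
  intro X hX Y hY a b ha hb hab
  refine ⟨(hX.1.smul ha).add (hY.1.smul hb), ?_⟩
  rw [trace_add, trace_smul, trace_smul, hX.2, hY.2, ← Complex.coe_smul, ← Complex.coe_smul]
  simp [← Complex.ofReal_add, hab]

open scoped MatrixOrder in
lemma IsState.posSemidef_one_sub {ρ : Matrix d d ℂ} (h : IsState ρ) : (1 - ρ).PosSemidef := by
  have hH := h.1.isHermitian
  have hsum : ∑ i, hH.eigenvalues i = 1 := by
    simpa [h.2, eq_comm] using congrArg RCLike.re hH.trace_eq_sum_eigenvalues
  have hle : ρ ≤ algebraMap ℝ (Matrix d d ℂ) 1 := by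
    refine le_algebraMap_of_spectrum_le fun x hx => ?_
    obtain ⟨i, rfl⟩ := hH.spectrum_real_eq_range_eigenvalues ▸ hx
    exact hsum ▸ Finset.single_le_sum (fun j _ => h.1.eigenvalues_nonneg j) (Finset.mem_univ i)
  rwa [map_one] at hle

lemma IsState.nonempty {ρ : Matrix d d ℂ} (h : IsState ρ) : Nonempty d :=
  not_isEmpty_iff.mp fun _ => by simpa [trace] using h.2

lemma exists_isState_smul_eq_add {σ₁ σ₂ : Matrix d d ℂ} (h₁ : IsState σ₁) (h₂ : IsState σ₂)
    {a b : ℝ} (ha : 0 ≤ a) (hb : 0 ≤ b) :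
    ∃ σ, IsState σ ∧ (a + b) • σ = a • σ₁ + b • σ₂ := by
  rcases (add_nonneg ha hb).eq_or_lt with hab | hab
  · obtain ⟨rfl, rfl⟩ := (add_eq_zero_iff_of_nonneg ha hb).mp hab.symm
    exact ⟨σ₁, h₁, by simp⟩
  refine ⟨(a / (a + b)) • σ₁ + (b / (a + b)) • σ₂,
    convex_setOf_isState h₁ h₂ (by positivity) (by positivity) (by field_simp), ?_⟩
  rw [smul_add, smul_smul, smul_smul, mul_div_cancel₀ _ hab.ne', mul_div_cancel₀ _ hab.ne']

end State

section Separable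

variable {m n : ℕ}

lemma convex_setOf_sepState :
    Convex ℝ {ρ : Matrix (Fin m × Fin n) (Fin m × Fin n) ℂ | SepState ρ} := by
  rintro _ ⟨k₁, p₁, A₁, B₁, hp₁, hs₁, hAB₁, rfl⟩ _ ⟨k₂, p₂, A₂, B₂, hp₂, hs₂, hAB₂, rfl⟩
    a b ha hb hab
  refine ⟨k₁ + k₂, Fin.append (a • p₁) (b • p₂), Fin.append A₁ A₂, Fin.append B₁ B₂,
    fun i => ?_, ?_, fun i => ?_, ?_⟩
  · induction i using Fin.addCases <;> simp [mul_nonneg, *]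
  · simp [Fin.sum_univ_add, ← Finset.mul_sum, hs₁, hs₂, hab]
  · induction i using Fin.addCases <;> simp [*]
  · simp [Fin.sum_univ_add, Finset.smul_sum, smul_smul]

lemma convex_setOf_isAbsSep :
    Convex ℝ {ρ : Matrix (Fin m × Fin n) (Fin m × Fin n) ℂ | IsAbsSep ρ} := by
  intro X hX Y hY a b ha hb hab U hU
  rw [mul_add, add_mul, mul_smul_comm, smul_mul_assoc, mul_smul_comm, smul_mul_assoc]
  exact convex_setOf_sepState (hX U hU) (hY U hU) ha hb hab

end Separable

section MaximallyMixed

variable (m n : ℕ)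

noncomputable def maximallyMixed : Matrix (Fin m × Fin n) (Fin m × Fin n) ℂ :=
  ((m * n : ℝ)⁻¹) • 1

lemma trace_maximallyMixed (hm : 0 < m) (hn : 0 < n) : (maximallyMixed m n).trace = 1 := by
  rw [maximallyMixed, trace_smul, trace_one, Fintype.card_prod, Fintype.card_fin,
    Fintype.card_fin, Complex.real_smul]
  push_cast
  field_simp

lemma maximallyMixed_eq_kronecker :
    maximallyMixed m n = kroneckerMap (· * ·) ((m : ℝ)⁻¹ • (1 : Matrix (Fin m) (Fin m) ℂ))
      ((n : ℝ)⁻¹ • (1 : Matrix (Fin n) (Fin n) ℂ)) := by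
  rw [maximallyMixed, mul_inv, smul_kronecker, kronecker_smul, one_kronecker_one, smul_smul]

lemma sepState_maximallyMixed (hm : 0 < m) (hn : 0 < n) : SepState (maximallyMixed m n) := by
  refine ⟨1, 1, fun _ => (m : ℝ)⁻¹ • 1, fun _ => (n : ℝ)⁻¹ • 1, fun _ => zero_le_one, by simp,
    fun _ => ⟨PosSemidef.one.smul (by positivity), ?_, PosSemidef.one.smul (by positivity), ?_⟩,
    by simp [maximallyMixed_eq_kronecker]⟩
  · simp [← Complex.coe_smul, hm.ne']
  · simp [← Complex.coe_smul, hn.ne']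

lemma isAbsSep_maximallyMixed (hm : 0 < m) (hn : 0 < n) : IsAbsSep (maximallyMixed m n) := by
  intro U hU
  rw [maximallyMixed, mul_smul_comm, mul_one, smul_mul_assoc, mem_unitaryGroup_iff.mp hU]
  exact sepState_maximallyMixed m n hm hn

end MaximallyMixed

lemma Real.sInf_le_mul_sInf_add_mul_sInf {s s₁ s₂ : Set ℝ} (hs : BddBelow s)
    (hne₁ : s₁.Nonempty) (hbdd₁ : BddBelow s₁) (hne₂ : s₂.Nonempty) (hbdd₂ : BddBelow s₂)
    {a b : ℝ} (ha : 0 ≤ a) (hb : 0 ≤ b) (hmem : ∀ x ∈ s₁, ∀ y ∈ s₂, a * x + b * y ∈ s) :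
    sInf s ≤ a * sInf s₁ + b * sInf s₂ := by
  calc sInf s ≤ sInf (a • s₁ + b • s₂) :=
        csInf_le_csInf hs (hne₁.smul_set.add hne₂.smul_set) <| by
          rintro _ ⟨_, ⟨x, hx, rfl⟩, _, ⟨y, hy, rfl⟩, rfl⟩
          exact hmem x hx y hy
    _ = a * sInf s₁ + b * sInf s₂ := by
      rw [csInf_add hne₁.smul_set (hbdd₁.smul_of_nonneg ha) hne₂.smul_set
        (hbdd₂.smul_of_nonneg hb), Real.sInf_smul_of_nonneg ha, Real.sInf_smul_of_nonneg hb]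
      rfl

section MixingWeights

variable {m n : ℕ}

def absSepMixingWeights (ρ : Matrix (Fin m × Fin n) (Fin m × Fin n) ℂ) : Set ℝ :=
  {t | 0 ≤ t ∧ ∃ σ, IsState σ ∧ IsAbsSep ((1 + t)⁻¹ • (ρ + t • σ))}

lemma AR_eq_sInf_absSepMixingWeights (ρ : Matrix (Fin m × Fin n) (Fin m × Fin n) ℂ) :
    AR ρ = sInf (absSepMixingWeights ρ) := by
  simp only [AR, absSepMixingWeights, Complex.coe_smul, one_div]

lemma bddBelow_absSepMixingWeights (ρ : Matrix (Fin m × Fin n) (Fin m × Fin n) ℂ) :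
    BddBelow (absSepMixingWeights ρ) :=
  ⟨0, fun _ ht => ht.1⟩

lemma mem_absSepMixingWeights_of_posSemidef {ρ τ : Matrix (Fin m × Fin n) (Fin m × Fin n) ℂ}
    (hρ : ρ.trace = 1) (hτ : IsAbsSep τ) (hτ₁ : τ.trace = 1) {t : ℝ} (ht : 0 < t)
    (hle : ((1 + t) • τ - ρ).PosSemidef) : t ∈ absSepMixingWeights ρ := by
  refine ⟨ht.le, t⁻¹ • ((1 + t) • τ - ρ), ⟨hle.smul (inv_nonneg.2 ht.le), ?_⟩, ?_⟩
  · rw [trace_smul, trace_sub, trace_smul, hτ₁, hρ, Complex.real_smul, Complex.real_smul]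
    push_cast
    field_simp
    ring
  · rwa [smul_smul, mul_inv_cancel₀ ht.ne', one_smul, add_sub_cancel, smul_smul,
      inv_mul_cancel₀ (by positivity), one_smul]

lemma IsState.absSepMixingWeights_nonempty {ρ : Matrix (Fin m × Fin n) (Fin m × Fin n) ℂ}
    (h : IsState ρ) : (absSepMixingWeights ρ).Nonempty := by
  obtain ⟨i, j⟩ := h.nonempty.some
  have hm := i.pos
  have hn := j.pos
  have hmn : (1 : ℝ) ≤ m * n := by exact_mod_cast Nat.mul_pos hm hn
  refine ⟨2 * (m * n) - 1, mem_absSepMixingWeights_of_posSemidef h.2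
    (isAbsSep_maximallyMixed m n hm hn) (trace_maximallyMixed m n hm hn) (by linarith) ?_⟩
  have hscale : (1 + (2 * (m * n) - 1 : ℝ)) • maximallyMixed m n = 1 + 1 := by
    rw [maximallyMixed, smul_smul, ← two_smul ℝ]
    congr 1
    field_simp
    ring
  rw [hscale, add_sub_assoc]
  exact PosSemidef.one.add h.posSemidef_one_sub

lemma smul_add_smul_mem_absSepMixingWeights {ρ₁ ρ₂ : Matrix (Fin m × Fin n) (Fin m × Fin n) ℂ}
    {t₁ t₂ : ℝ} (h₁ : t₁ ∈ absSepMixingWeights ρ₁) (h₂ : t₂ ∈ absSepMixingWeights ρ₂)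
    {a b : ℝ} (ha : 0 ≤ a) (hb : 0 ≤ b) (hab : a + b = 1) :
    a * t₁ + b * t₂ ∈ absSepMixingWeights (a • ρ₁ + b • ρ₂) := by
  obtain ⟨ht₁, σ₁, hσ₁, hτ₁⟩ := h₁
  obtain ⟨ht₂, σ₂, hσ₂, hτ₂⟩ := h₂
  obtain ⟨σ, hσ, hσeq⟩ :=
    exists_isState_smul_eq_add hσ₁ hσ₂ (mul_nonneg ha ht₁) (mul_nonneg hb ht₂)
  refine ⟨by positivity, σ, hσ, ?_⟩
  have hmix : (1 + (a * t₁ + b * t₂))⁻¹ • (a • ρ₁ + b • ρ₂ + (a * t₁ + b * t₂) • σ) =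
      (a * (1 + t₁) / (1 + (a * t₁ + b * t₂))) • ((1 + t₁)⁻¹ • (ρ₁ + t₁ • σ₁)) +
      (b * (1 + t₂) / (1 + (a * t₁ + b * t₂))) • ((1 + t₂)⁻¹ • (ρ₂ + t₂ • σ₂)) := by
    rw [hσeq]
    match_scalars <;> field_simp
  rw [hmix]
  exact convex_setOf_isAbsSep hτ₁ hτ₂ (by positivity) (by positivity) (by field_simp; linarith)

end MixingWeights

theorem AR_convex {m n : ℕ} (ρ₁ ρ₂ : Matrix (Fin m × Fin n) (Fin m × Fin n) ℂ)
    (h₁ : IsState ρ₁) (h₂ : IsState ρ₂) (p : ℝ) (hp0 : 0 < p) (hp1 : p < 1) :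
    AR (((p : ℂ)) • ρ₁ + (((1 - p : ℝ)) : ℂ) • ρ₂) ≤ p * AR ρ₁ + (1 - p) * AR ρ₂ := by
  simp only [AR_eq_sInf_absSepMixingWeights, Complex.coe_smul]
  exact Real.sInf_le_mul_sInf_add_mul_sInf (bddBelow_absSepMixingWeights _)
    h₁.absSepMixingWeights_nonempty (bddBelow_absSepMixingWeights _)
    h₂.absSepMixingWeights_nonempty (bddBelow_absSepMixingWeights _) hp0.le (sub_nonneg.2 hp1.le)
    fun _ hx _ hy =>
      smul_add_smul_mem_absSepMixingWeights hx hy hp0.le (sub_nonneg.2 hp1.le) (add_sub_cancel p 1)
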